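/- arXiv:1001.5437 — 3 statements merged into one kernel-verified Lean document; each statement's English description precedes it below -/
import Mathlib

section
/- A triangulation S of C(m,2d) is uniquely determined by its set of d-dimensional faces. More precisely, the faces of S of dimension at least d are exactly those simplices all of whose d-faces are either non-separated (lying on a lower boundary facet) or contained in e(S). -/
/-!
Any `2d+1` points on the moment curve in `ℝ^{2d}` are affinely independent, and the affine
dependence of `2d+2` of them alternates in sign along the curve, so its positive and negative
parts are separated `(d+1)`-sets. Suppose every separated `(d+1)`-subset of `F` lies in a simplex
of `S` but `F` does not. The centroid of `F` lies in some simplex `B`, which gives a nonzero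
dependence with positive part in `F` and negative part in `B`; subtracting alternating
dependences on `2d+2` points of its support reduces it to a conforming alternating dependence
`η`. The positive part of `η` lies in a simplex `B₂` of `S`. The convex hulls of the two parts
of `η` meet, hence meet in the common face of `B₂` and `B`, and uniqueness of barycentric
coordinates then puts the whole support of `η` into `B₂`, which is impossible.
-/

open Finset

/-- The point `p_t = (t, t², …, t^D)` on the moment curve in `ℝ^D`. -/
noncomputable def momentPt (D : ℕ) (t : ℝ) : EuclideanSpace ℝ (Fin D) :=
  WithLp.toLp 2 (fun i : Fin D => t ^ (i.1 + 1))

/-- `X` intertwines `Y`: `x₀ < y₀ < x₁ < y₁ < ⋯ < x_d < y_d`. -/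
def Intw {n : ℕ} {α : Type*} [LT α] (X Y : Fin n → α) : Prop :=
  (∀ i, X i < Y i) ∧ ∀ i j : Fin n, i.1 + 1 = j.1 → Y i < X j

/-- A collection of tuples is non-intertwining if no pair intertwines (in either order). -/
def NonIntw {n : ℕ} {α : Type*} [LT α] (R : Set (Fin n → α)) : Prop :=
  ∀ X ∈ R, ∀ Y ∈ R, ¬ Intw X Y

/-- A separated `(d+1)`-tuple from `{1,…,m}`: increasing with consecutive gaps at least 2. -/
def SepTuple (d m : ℕ) (A : Fin (d+1) → ℕ) : Prop :=
  (∀ x, 1 ≤ A x ∧ A x ≤ m) ∧ ∀ i j : Fin (d+1), i.1 + 1 = j.1 → A i + 2 ≤ A j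

/-- The vertex of the cyclic polytope `C(m,2d)` with label `i+1`. -/
noncomputable def cycVert (d m : ℕ) (i : Fin m) : EuclideanSpace ℝ (Fin (2*d)) :=
  momentPt (2*d) (i.1 + 1)

/-- The convex hull of the vertices of `C(m,2d)` indexed by a finite set `B`. -/
noncomputable def cycHull (d m : ℕ) (B : Finset (Fin m)) : Set (EuclideanSpace ℝ (Fin (2*d))) :=
  convexHull ℝ (cycVert d m '' (B : Set (Fin m)))

/-- The cyclic polytope `C(m,2d)`. -/
noncomputable def cycPoly (d m : ℕ) : Set (EuclideanSpace ℝ (Fin (2*d))) :=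
  convexHull ℝ (Set.range (cycVert d m))

/-- A triangulation of `C(m,2d)`: a collection of `2d`-simplices on the vertices which
covers the polytope and in which any two simplices meet along a common face. -/
def IsTriang (d m : ℕ) (S : Finset (Finset (Fin m))) : Prop :=
  (∀ B ∈ S, B.card = 2*d+1) ∧
  (∀ B ∈ S, AffineIndependent ℝ (fun v : B => cycVert d m v)) ∧
  (⋃ B ∈ S, cycHull d m B) = cycPoly d m ∧
  ∀ B₁ ∈ S, ∀ B₂ ∈ S, cycHull d m B₁ ∩ cycHull d m B₂ = cycHull d m (B₁ ∩ B₂)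

/-- A separated subset of vertices: no two consecutive labels. -/
def SepFinset (m : ℕ) (F : Finset (Fin m)) : Prop :=
  ∀ i ∈ F, ∀ j ∈ F, (j : Fin m).1 ≠ (i : Fin m).1 + 1

/-- `e(S)` as a set of vertex subsets: separated `(d+1)`-element faces of the triangulation. -/
def eSetF (d m : ℕ) (S : Finset (Finset (Fin m))) : Set (Finset (Fin m)) :=
  {F | F.card = d + 1 ∧ SepFinset m F ∧ ∃ B ∈ S, F ⊆ B}

open Polynomial

section PowerSums

variable {ι : Type*} [Fintype ι]

/-- `w` is an affine dependence of the points `(t i, t i ^ 2, …, t i ^ n)` on the moment curve. -/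
def PowerSumsVanish (n : ℕ) (t w : ι → ℝ) : Prop :=
  ∀ k ≤ n, ∑ i, w i * t i ^ k = 0

namespace PowerSumsVanish

variable {n : ℕ} {t w w' : ι → ℝ}

lemma sub (h : PowerSumsVanish n t w) (h' : PowerSumsVanish n t w') :
    PowerSumsVanish n t (w - w') := by
  intro k hk
  simp only [Pi.sub_apply, sub_mul, sum_sub_distrib, h k hk, h' k hk, sub_zero]

lemma smul (h : PowerSumsVanish n t w) (c : ℝ) : PowerSumsVanish n t (c • w) := by
  intro k hk
  simp only [Pi.smul_apply, smul_eq_mul, mul_assoc, ← mul_sum, h k hk, mul_zero]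

lemma extend {κ : Type*} [Fintype κ] {t : κ → ℝ} {e : ι → κ} (he : Function.Injective e)
    {g : ι → ℝ} (h : PowerSumsVanish n (t ∘ e) g) :
    PowerSumsVanish n t (Function.extend e g 0) := by
  intro k hk
  rw [← h k hk]
  refine (Fintype.sum_of_injective e he _ _ (fun v hv => ?_) fun i => ?_).symm
  · simp [Function.extend_apply' g (0 : κ → ℝ) v hv]
  · simp [he.extend_apply]

lemma sum_mul_eval (h : PowerSumsVanish n t w) {q : ℝ[X]} (hq : q.natDegree ≤ n) :
    ∑ i, w i * q.eval (t i) = 0 := by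
  simp_rw [eval_eq_sum_range' (Nat.lt_succ_of_le hq), mul_sum, mul_left_comm (w _)]
  rw [sum_comm]
  refine sum_eq_zero fun k hk => ?_
  rw [← mul_sum, h k (Nat.lt_succ_iff.mp (mem_range.mp hk)), mul_zero]

lemma sum_compl_mul_prod_sub [DecidableEq ι] (h : PowerSumsVanish n t w) (s : Finset ι)
    (hs : s.card ≤ n) : ∑ i ∈ sᶜ, w i * ∏ u ∈ s, (t i - t u) = 0 := by
  have := h.sum_mul_eval (q := ∏ u ∈ s, (X - C (t u)))
    (by rwa [natDegree_finsetProd_X_sub_C_eq_card])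
  simp only [eval_prod, eval_sub, eval_X, eval_C] at this
  rwa [← sum_add_sum_compl s, sum_eq_zero fun i hi => by rw [prod_eq_zero hi (sub_self _),
    mul_zero], zero_add] at this

lemma eq_zero_of_support_subset (h : PowerSumsVanish n t w) (ht : Function.Injective t)
    {s : Finset ι} (hs : s.card ≤ n + 1) (hw : ∀ i ∉ s, w i = 0) : w = 0 := by
  classical
  funext i
  by_contra hwi
  have hi : i ∈ s := by_contra fun hi => hwi (hw i hi)
  have hsum := h.sum_compl_mul_prod_sub (s.erase i) (by rw [card_erase_of_mem hi]; omega)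
  rw [sum_eq_single_of_mem i (by simp) fun j hj hji => by
    rw [hw j (by simpa [hji] using hj), zero_mul]] at hsum
  refine mul_ne_zero hwi (prod_ne_zero_iff.mpr fun u hu => ?_) hsum
  exact sub_ne_zero.mpr fun htu => ne_of_mem_erase hu (ht htu).symm

lemma apply_ne_zero (h : PowerSumsVanish n t w) (ht : Function.Injective t)
    (hcard : Fintype.card ι = n + 2) (hw : w ≠ 0) (i : ι) : w i ≠ 0 := by
  classical
  refine fun hi => hw (h.eq_zero_of_support_subset ht (s := univ.erase i) ?_ fun j hj => ?_)
  · rw [card_erase_of_mem (mem_univ i), card_univ, hcard]; omega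
  · obtain rfl : j = i := by simpa using hj
    exact hi

/-- The polynomial vanishing at all other nodes has the same sign at two adjacent nodes. -/
lemma mul_castSucc_succ_neg {t w : Fin (n + 2) → ℝ} (h : PowerSumsVanish n t w)
    (ht : StrictMono t) (hw : w ≠ 0) (i : Fin (n + 1)) : w i.castSucc * w i.succ < 0 := by
  set a := i.castSucc
  set b := i.succ
  have hab : a ≠ b := Fin.castSucc_lt_succ.ne
  have hsum := h.sum_compl_mul_prod_sub ({a, b}ᶜ) (by
    rw [card_compl, card_pair hab, Fintype.card_fin]; omega)
  rw [compl_compl, sum_pair hab] at hsum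
  set pa := ∏ u ∈ {a, b}ᶜ, (t a - t u)
  set pb := ∏ u ∈ {a, b}ᶜ, (t b - t u)
  have hpapb : 0 < pa * pb := by
    rw [← prod_mul_distrib]
    refine prod_pos fun u hu => ?_
    simp only [mem_compl, mem_insert, mem_singleton, not_or] at hu
    rcases lt_or_gt_of_ne hu.1 with hua | hua
    · exact mul_pos (sub_pos.mpr (ht hua)) (sub_pos.mpr (ht (hua.trans Fin.castSucc_lt_succ)))
    · have hub : b < u := (Fin.castSucc_lt_iff_succ_le.mp hua).lt_of_ne (Ne.symm hu.2)
      exact mul_pos_of_neg_of_neg (sub_neg.mpr (ht hua)) (sub_neg.mpr (ht hub))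
  have hwb := h.apply_ne_zero ht.injective (Fintype.card_fin _) hw b
  have hpb : pb ≠ 0 := right_ne_zero_of_mul hpapb.ne'
  have key : w a * w b * (pa * pb) = -(w b * pb) ^ 2 := by
    linear_combination (w b * pb) * hsum
  have hsq : 0 < (w b * pb) ^ 2 := by positivity
  nlinarith

end PowerSumsVanish

end PowerSums

lemma exists_ne_zero_powerSumsVanish {n : ℕ} (t : Fin (n + 2) → ℝ) :
    ∃ w ≠ 0, PowerSumsVanish n t w := by
  have hli : ¬ LinearIndependent ℝ (fun i (k : Fin (n + 1)) => t i ^ (k : ℕ)) := fun hli => by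
    simpa using hli.fintype_card_le_finrank
  obtain ⟨w, hw, i, hi⟩ := Fintype.not_linearIndependent_iff.mp hli
  refine ⟨w, fun h => hi (by simp [h]), fun k hk => ?_⟩
  simpa using congr_fun hw ⟨k, by omega⟩

lemma pos_iff_even_of_mul_castSucc_succ_neg {n : ℕ} {g : Fin (n + 1) → ℝ} (h0 : 0 < g 0)
    (h : ∀ i : Fin n, g i.castSucc * g i.succ < 0) (i : Fin (n + 1)) :
    0 < g i ↔ Even (i : ℕ) := by
  induction i using Fin.induction with
  | zero => simpa using h0
  | succ i ih =>
    rw [Fin.val_succ, Nat.even_add_one, ← Fin.val_castSucc, ← ih]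
    have := h i
    constructor
    · intro hs hc
      nlinarith
    · intro hc
      nlinarith

lemma Fin.card_filter_val_even (d : ℕ) :
    (univ.filter fun i : Fin (2 * d + 2) => Even (i : ℕ)).card = d + 1 := by
  rw [card_filter, Fin.sum_univ_eq_sum_range (fun i => if Even i then 1 else 0)]
  induction d with
  | zero => decide
  | succ d ih =>
    rw [show 2 * (d + 1) + 2 = 2 * d + 2 + 1 + 1 by ring, sum_range_succ, sum_range_succ, ih]
    simp [Nat.even_add_one, parity_simps]

lemma Fin.card_filter_val_not_even (d : ℕ) :
    (univ.filter fun i : Fin (2 * d + 2) => ¬ Even (i : ℕ)).card = d + 1 := by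
  have := card_filter_add_card_filter_not (s := univ) (fun i : Fin (2 * d + 2) => Even (i : ℕ))
  rw [Fin.card_filter_val_even, card_univ, Fintype.card_fin] at this
  omega

section Signs

variable {ι : Type*}

/-- `η` conforms to `γ` in the sense of oriented matroids. -/
def Conforms (η γ : ι → ℝ) : Prop :=
  ∀ i, (0 < η i → 0 < γ i) ∧ (η i < 0 → γ i < 0)

namespace Conforms

variable {η γ δ : ι → ℝ}

lemma refl (γ : ι → ℝ) : Conforms γ γ := fun _ => ⟨id, id⟩

lemma trans (h : Conforms η γ) (h' : Conforms γ δ) : Conforms η δ :=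
  fun i => ⟨(h' i).1 ∘ (h i).1, (h' i).2 ∘ (h i).2⟩

lemma ne_zero (h : Conforms η γ) {i : ι} (hi : η i ≠ 0) : γ i ≠ 0 :=
  hi.lt_or_gt.elim (fun hn => ((h i).2 hn).ne) fun hp => ((h i).1 hp).ne'

end Conforms

lemma conforms_sub_smul_of_abs_le {γ η : ι → ℝ} {t : ℝ}
    (h : ∀ i, η i ≠ 0 → |t| ≤ |γ i / η i|) : Conforms (γ - t • η) γ := by
  intro i
  simp only [Pi.sub_apply, Pi.smul_apply, smul_eq_mul]
  rcases eq_or_ne (η i) 0 with hη | hη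
  · simp [hη]
  obtain ⟨r, hr⟩ : ∃ r, γ i = r * η i := ⟨γ i / η i, (div_mul_cancel₀ _ hη).symm⟩
  have hle := abs_le.mp ((h i hη).trans_eq (by rw [hr, mul_div_cancel_right₀ r hη]))
  rw [hr, ← sub_mul]
  rcases abs_cases r with ⟨habs, hr0⟩ | ⟨habs, hr0⟩ <;> rw [habs] at hle <;>
    constructor <;> intro h₁
  all_goals first
    | rcases mul_pos_iff.mp h₁ with ⟨h1, h2⟩ | ⟨h1, h2⟩ <;> nlinarith
    | rcases mul_neg_iff.mp h₁ with ⟨h1, h2⟩ | ⟨h1, h2⟩ <;> nlinarith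

variable [Fintype ι]

noncomputable def posSupp (w : ι → ℝ) : Finset ι := univ.filter (0 < w ·)

noncomputable def negSupp (w : ι → ℝ) : Finset ι := univ.filter (w · < 0)

lemma posSupp_smul_of_pos {c : ℝ} (hc : 0 < c) (w : ι → ℝ) : posSupp (c • w) = posSupp w := by
  ext i
  simp [posSupp, mul_pos_iff_of_pos_left hc]

lemma posSupp_smul_of_neg {c : ℝ} (hc : c < 0) (w : ι → ℝ) : posSupp (c • w) = negSupp w := by
  ext i
  simp only [posSupp, negSupp, mem_filter, mem_univ, true_and, Pi.smul_apply, smul_eq_mul]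
  constructor <;> intro h <;> nlinarith

lemma filter_extend_zero {κ : Type*} [Fintype κ] (e : ι ↪ κ) (g : ι → ℝ) (p : ℝ → Prop)
    [DecidablePred p] (hp : ¬ p 0) :
    univ.filter (fun v => p (Function.extend e g (0 : κ → ℝ) v)) =
      (univ.filter fun i => p (g i)).map e := by
  ext v
  simp only [mem_filter, mem_univ, true_and, mem_map]
  by_cases hv : ∃ i, e i = v
  · obtain ⟨i, rfl⟩ := hv
    simp [e.injective.extend_apply, e.injective.eq_iff]
  · rw [Function.extend_apply' g (0 : κ → ℝ) v hv]
    exact iff_of_false hp fun ⟨i, _, hi⟩ => hv ⟨i, hi⟩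

lemma Conforms.posSupp_subset {η γ : ι → ℝ} (h : Conforms η γ) : posSupp η ⊆ posSupp γ := by
  intro i
  simpa [posSupp] using (h i).1

lemma Conforms.negSupp_subset {η γ : ι → ℝ} (h : Conforms η γ) : negSupp η ⊆ negSupp γ := by
  intro i
  simpa [negSupp] using (h i).2

lemma exists_conforms_sub_smul (γ : ι → ℝ) {η : ι → ℝ} (hη : η ≠ 0) :
    ∃ t : ℝ, Conforms (γ - t • η) γ ∧ ∃ i, η i ≠ 0 ∧ (γ - t • η) i = 0 := by
  obtain ⟨i₀, hi₀, hmin⟩ := (univ.filter (η · ≠ 0)).exists_min_image (fun i => |γ i / η i|)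
    (by simpa [filter_nonempty_iff, funext_iff] using hη)
  simp only [mem_filter, mem_univ, true_and] at hi₀ hmin
  refine ⟨γ i₀ / η i₀, conforms_sub_smul_of_abs_le hmin, i₀, hi₀, ?_⟩
  simp [div_mul_cancel₀ _ hi₀]

end Signs

lemma exists_powerSumsVanish_posSupp_eq {n : ℕ} {t : Fin (n + 2) → ℝ} (ht : StrictMono t) :
    ∃ w, PowerSumsVanish n t w ∧ posSupp w = univ.filter (fun i : Fin (n + 2) => Even (i : ℕ)) ∧
      negSupp w = univ.filter (fun i : Fin (n + 2) => ¬ Even (i : ℕ)) := by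
  obtain ⟨w, hw, hpsv⟩ := exists_ne_zero_powerSumsVanish t
  have hne := hpsv.apply_ne_zero ht.injective (Fintype.card_fin _) hw
  wlog h0 : 0 < w 0 generalizing w
  · refine this (-w) (neg_ne_zero.mpr hw) (by simpa using hpsv.smul (-1))
      (fun i => neg_ne_zero.mpr (hne i)) (neg_pos.mpr ((hne 0).lt_or_gt.resolve_right h0))
  have hpar := pos_iff_even_of_mul_castSucc_succ_neg h0 (hpsv.mul_castSucc_succ_neg ht hw)
  refine ⟨w, hpsv, by ext i; simp [posSupp, hpar], ?_⟩
  ext i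
  simp only [negSupp, mem_filter, mem_univ, true_and, ← hpar, not_lt]
  exact ⟨le_of_lt, fun hle => hle.lt_of_ne (hne i)⟩

namespace CyclicPolytope

variable {d m : ℕ}

noncomputable def param (v : Fin m) : ℝ := (v : ℕ) + 1

lemma param_strictMono : StrictMono (param (m := m)) := fun a b hab => by
  simpa [param] using hab

lemma powerSumsVanish_iff {γ : Fin m → ℝ} :
    PowerSumsVanish (2 * d) param γ ↔ ∑ v, γ v = 0 ∧ ∑ v, γ v • cycVert d m v = 0 := by
  have hcoord (k : Fin (2 * d)) :
      (∑ v, γ v • cycVert d m v) k = ∑ v, γ v * param v ^ (k + 1 : ℕ) := by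
    simp [cycVert, momentPt, param]
  constructor
  · intro h
    refine ⟨by simpa using h 0 (Nat.zero_le _), ?_⟩
    ext k
    rw [hcoord]
    exact h _ k.2
  · rintro ⟨h0, h1⟩ (_ | k) hk
    · simpa using h0
    · simpa [hcoord] using congr_arg (· ⟨k, hk⟩) h1

lemma powerSumsVanish_sub_iff {w w' : Fin m → ℝ} :
    PowerSumsVanish (2 * d) param (w - w') ↔
      ∑ v, w v = ∑ v, w' v ∧ ∑ v, w v • cycVert d m v = ∑ v, w' v • cycVert d m v := by
  simp [powerSumsVanish_iff, sub_smul, sum_sub_distrib, sub_eq_zero]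

lemma mem_cycHull_iff {B : Finset (Fin m)} {x : EuclideanSpace ℝ (Fin (2 * d))} :
    x ∈ cycHull d m B ↔ ∃ w : Fin m → ℝ, (∀ v, 0 ≤ w v) ∧ (∀ v ∉ B, w v = 0) ∧
      ∑ v, w v = 1 ∧ ∑ v, w v • cycVert d m v = x := by
  classical
  constructor
  · refine fun hx => convexHull_min (t := {y | ∃ w : Fin m → ℝ, (∀ v, 0 ≤ w v) ∧
      (∀ v ∉ B, w v = 0) ∧ ∑ v, w v = 1 ∧ ∑ v, w v • cycVert d m v = y}) ?_ ?_ hx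
    · rintro _ ⟨v, hv, rfl⟩
      refine ⟨Pi.single v 1, fun u => ?_, fun u hu => ?_, by simp, by simp [Pi.single_apply]⟩
      · by_cases huv : u = v <;> simp [huv]
      · simp [show u ≠ v by rintro rfl; exact hu hv]
    · rintro _ ⟨w₁, h0₁, hB₁, h1₁, rfl⟩ _ ⟨w₂, h0₂, hB₂, h1₂, rfl⟩ a b ha hb hab
      refine ⟨a • w₁ + b • w₂, fun v => ?_, fun v hv => ?_, ?_, ?_⟩
      · simp only [Pi.add_apply, Pi.smul_apply, smul_eq_mul]
        exact add_nonneg (mul_nonneg ha (h0₁ v)) (mul_nonneg hb (h0₂ v))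
      · simp [hB₁ v hv, hB₂ v hv]
      · simp [sum_add_distrib, ← mul_sum, h1₁, h1₂, hab]
      · simp [add_smul, mul_smul, sum_add_distrib, ← smul_sum]
  · rintro ⟨w, h0, hB, h1, rfl⟩
    rw [← sum_subset (subset_univ B) fun v _ hv => by rw [hB v hv, zero_smul]]
    refine (convex_convexHull ℝ _).sum_mem (fun v _ => h0 v) ?_
      fun v hv => subset_convexHull ℝ _ (Set.mem_image_of_mem _ hv)
    rwa [sum_subset (subset_univ B) fun v _ hv => hB v hv]

/-- Barycentric coordinates are unique on at most `2d+1` vertices. -/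
lemma mem_of_sum_smul_mem_cycHull {B C : Finset (Fin m)} (hB : B.card ≤ 2 * d + 1) (hCB : C ⊆ B)
    {w : Fin m → ℝ} (hwB : ∀ v ∉ B, w v = 0) (hw1 : ∑ v, w v = 1)
    (hC : ∑ v, w v • cycVert d m v ∈ cycHull d m C) {v : Fin m} (hv : w v ≠ 0) : v ∈ C := by
  obtain ⟨u, -, huC, hu1, hux⟩ := mem_cycHull_iff.mp hC
  have hwu : w - u = 0 :=
    (powerSumsVanish_sub_iff.mpr ⟨hw1.trans hu1.symm, hux.symm⟩).eq_zero_of_support_subset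
      param_strictMono.injective hB fun v hv => by
        simp [hwB v hv, huC v fun h => hv (hCB h)]
  by_contra hvC
  exact hv (by simpa [huC v hvC] using congr_fun hwu v)

/-- The normalised positive and negative parts of `η` express one point of
`cycHull (B₁ ∩ B₂)`; uniqueness of barycentric coordinates in `B₂` then puts the negative part
into `B₁`, and no nonzero dependence is supported on the simplex `B₁`. -/
theorem eq_zero_of_posSupp_subset_of_negSupp_subset {S : Finset (Finset (Fin m))}
    (hS : IsTriang d m S) {B₁ B₂ : Finset (Fin m)} (hB₁ : B₁ ∈ S) (hB₂ : B₂ ∈ S)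
    {η : Fin m → ℝ} (hη : PowerSumsVanish (2 * d) param η)
    (hpos : posSupp η ⊆ B₁) (hneg : negSupp η ⊆ B₂) : η = 0 := by
  obtain ⟨hcard, -, -, hinter⟩ := hS
  have hneg₁ : negSupp η ⊆ B₁ := by
    obtain ⟨hsum, hvec⟩ := powerSumsVanish_sub_iff.mp (posPart_sub_negPart η ▸ hη)
    simp only [Pi.posPart_apply, Pi.negPart_apply] at hsum hvec
    intro v hv
    have hv' : 0 < (η v)⁻ := negPart_pos_iff.mpr (by simpa [negSupp] using hv)
    set τ := ∑ u, (η u)⁻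
    have hτ : 0 < τ := hv'.trans_le (single_le_sum (fun u _ => negPart_nonneg (η u)) (mem_univ v))
    set w : Fin m → ℝ := fun u => τ⁻¹ * (η u)⁻
    have hw1 : ∑ u, w u = 1 := by simp [w, ← mul_sum, τ, hτ.ne']
    have hwB₂ : ∀ u ∉ B₂, w u = 0 := fun u hu => by
      have : 0 ≤ η u := not_lt.mp fun h => hu (hneg (by simpa [negSupp] using h))
      simp [w, negPart_eq_zero.mpr this]
    have hz₁ : ∑ u, w u • cycVert d m u ∈ cycHull d m B₁ := by
      refine mem_cycHull_iff.mpr ⟨fun u => τ⁻¹ * (η u)⁺, fun u => ?_, fun u hu => ?_, ?_, ?_⟩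
      · exact mul_nonneg (inv_nonneg.mpr hτ.le) (posPart_nonneg (η u))
      · have : η u ≤ 0 := not_lt.mp fun h => hu (hpos (by simpa [posSupp] using h))
        simp [posPart_eq_zero.mpr this]
      · simp [← mul_sum, hsum, hτ.ne']
      · simp [w, mul_smul, ← smul_sum, hvec]
    have hz₂ : ∑ u, w u • cycVert d m u ∈ cycHull d m B₂ :=
      mem_cycHull_iff.mpr ⟨w, fun u => mul_nonneg (inv_nonneg.mpr hτ.le) (negPart_nonneg (η u)),
        hwB₂, hw1, rfl⟩
    have hz : ∑ u, w u • cycVert d m u ∈ cycHull d m (B₁ ∩ B₂) :=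
      hinter B₁ hB₁ B₂ hB₂ ▸ ⟨hz₁, hz₂⟩
    exact (mem_inter.mp (mem_of_sum_smul_mem_cycHull (hcard B₂ hB₂).le inter_subset_right hwB₂
      hw1 hz (mul_ne_zero (inv_ne_zero hτ.ne') hv'.ne'))).1
  refine hη.eq_zero_of_support_subset param_strictMono.injective (hcard B₁ hB₁).le fun v hv => ?_
  by_contra hne
  rcases Ne.lt_or_gt hne with h | h
  · exact hv (hneg₁ (by simpa [negSupp] using h))
  · exact hv (hpos (by simpa [posSupp] using h))

lemma sepFinset_map {k : ℕ} (e : Fin k ↪o Fin m) {I : Finset (Fin k)}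
    (hI : ∀ i ∈ I, ∀ j ∈ I, (j : ℕ) ≠ i + 1) : SepFinset m (I.map e.toEmbedding) := by
  simp only [SepFinset, mem_map, RelEmbedding.coe_toEmbedding]
  rintro _ ⟨i, hi, rfl⟩ _ ⟨j, hj, rfl⟩ hij
  have hlt : i < j := e.lt_iff_lt.mp (Fin.lt_def.mpr (by omega))
  have hgap : (i : ℕ) + 1 < j := by have := hI i hi j hj; rw [Fin.lt_def] at hlt; omega
  have h₁ : e i < e ⟨i + 1, by omega⟩ := e.lt_iff_lt.mpr (Fin.lt_def.mpr (by simp))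
  have h₂ : e ⟨i + 1, by omega⟩ < e j := e.lt_iff_lt.mpr (Fin.lt_def.mpr (by simpa using hgap))
  rw [Fin.lt_def] at h₁ h₂
  omega

/-- The dependence of `2d+2` points of the moment curve alternates in sign along them. -/
theorem exists_powerSumsVanish_sepFinset_of_card_eq {D : Finset (Fin m)}
    (hD : D.card = 2 * d + 2) :
    ∃ η : Fin m → ℝ, PowerSumsVanish (2 * d) param η ∧ (∀ v, η v ≠ 0 → v ∈ D) ∧
      (posSupp η).card = d + 1 ∧ SepFinset m (posSupp η) ∧
      (negSupp η).card = d + 1 ∧ SepFinset m (negSupp η) := by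
  set e := D.orderEmbOfFin hD
  obtain ⟨g, hg, hpos, hneg⟩ :=
    exists_powerSumsVanish_posSupp_eq (param_strictMono.comp e.strictMono)
  have hposη : posSupp (Function.extend e g 0) = (posSupp g).map e.toEmbedding :=
    filter_extend_zero e.toEmbedding g (0 < ·) (lt_irrefl 0)
  have hnegη : negSupp (Function.extend e g 0) = (negSupp g).map e.toEmbedding :=
    filter_extend_zero e.toEmbedding g (· < 0) (lt_irrefl 0)
  refine ⟨Function.extend e g 0, hg.extend e.injective, fun v hv => ?_, ?_, ?_, ?_, ?_⟩
  · by_contra hvD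
    refine hv (Function.extend_apply' g (0 : Fin m → ℝ) v ?_)
    rintro ⟨i, rfl⟩
    exact hvD (D.orderEmbOfFin_mem hD i)
  · rw [hposη, card_map, hpos, Fin.card_filter_val_even]
  · rw [hposη, hpos]
    refine sepFinset_map e fun i hi j hj h => ?_
    simp only [mem_filter, mem_univ, true_and] at hi hj
    rw [h, Nat.even_add_one] at hj
    exact hj hi
  · rw [hnegη, card_map, hneg, Fin.card_filter_val_not_even]
  · rw [hnegη, hneg]
    refine sepFinset_map e fun i hi j hj h => ?_
    simp only [mem_filter, mem_univ, true_and] at hi hj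
    rw [h, Nat.even_add_one, not_not] at hj
    exact hi hj

/-- Induction on the support of `γ`: subtracting a multiple of the alternating dependence on
`2d+2` points of the support either kills a coordinate while keeping the signs, or shows that
`γ` itself is such a dependence. -/
theorem exists_conforms_sepFinset_posSupp {γ : Fin m → ℝ}
    (hγ : PowerSumsVanish (2 * d) param γ) (hγ0 : γ ≠ 0) :
    ∃ η, PowerSumsVanish (2 * d) param η ∧ η ≠ 0 ∧ Conforms η γ ∧
      (posSupp η).card = d + 1 ∧ SepFinset m (posSupp η) := by
  induction hn : (univ.filter (γ · ≠ 0)).card using Nat.strong_induction_on generalizing γ with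
  | _ n ih =>
  set A := univ.filter (γ · ≠ 0)
  have hA : 2 * d + 2 ≤ A.card := by
    by_contra h
    exact hγ0 (hγ.eq_zero_of_support_subset param_strictMono.injective (s := A) (by omega)
      fun v hv => by simpa [A] using hv)
  obtain ⟨D, hDA, hD⟩ := exists_subset_card_eq hA
  obtain ⟨η, hη, hηD, hposcard, hpossep, hnegcard, hnegsep⟩ :=
    exists_powerSumsVanish_sepFinset_of_card_eq hD
  have hη0 : η ≠ 0 := by
    obtain ⟨v, hv⟩ := card_pos.mp (show 0 < (posSupp η).card by omega)
    exact fun h => by simp [posSupp, h] at hv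
  obtain ⟨t, hconf, v₀, hv₀, hζv₀⟩ := exists_conforms_sub_smul γ hη0
  by_cases hζ : γ - t • η = 0
  · refine ⟨γ, hγ, hγ0, Conforms.refl γ, ?_⟩
    rw [sub_eq_zero.mp hζ]
    rcases lt_trichotomy t 0 with ht | rfl | ht
    · rw [posSupp_smul_of_neg ht]
      exact ⟨hnegcard, hnegsep⟩
    · exact absurd (by simpa using sub_eq_zero.mp hζ) hγ0
    · rw [posSupp_smul_of_pos ht]
      exact ⟨hposcard, hpossep⟩
  · have hlt : (univ.filter ((γ - t • η) · ≠ 0)).card < n := by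
      rw [← hn]
      refine card_lt_card ⟨fun v hv => ?_, fun hsub => ?_⟩
      · simpa [A] using hconf.ne_zero (by simpa using hv)
      · have := hsub (hDA (hηD v₀ hv₀))
        simp only [mem_filter, mem_univ, true_and] at this
        exact this hζv₀
    obtain ⟨η', hη', hη'0, hconf', hcard', hsep'⟩ := ih _ hlt (hγ.sub (hη.smul t)) hζ rfl
    exact ⟨η', hη', hη'0, hconf'.trans hconf, hcard', hsep'⟩

/-- `γ` is the difference of two barycentric expressions of the centroid of `F`, the second one
in a simplex `B` containing it. -/
theorem exists_powerSumsVanish_of_forall_not_subset {S : Finset (Finset (Fin m))}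
    (hS : IsTriang d m S) {F : Finset (Fin m)} (hF : F.Nonempty) (hFS : ∀ B ∈ S, ¬ F ⊆ B) :
    ∃ B ∈ S, ∃ γ, PowerSumsVanish (2 * d) param γ ∧ γ ≠ 0 ∧ posSupp γ ⊆ F ∧ negSupp γ ⊆ B := by
  set α : Fin m → ℝ := fun v => if v ∈ F then (F.card : ℝ)⁻¹ else 0
  have hα0 (v) : 0 ≤ α v := by positivity
  have hα1 : ∑ v, α v = 1 := by simp [α, sum_ite_mem, hF.card_pos.ne']
  have hx : ∑ v, α v • cycVert d m v ∈ cycPoly d m := convexHull_mono (Set.image_subset_range _ _)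
    (mem_cycHull_iff.mpr ⟨α, hα0, fun v hv => if_neg hv, hα1, rfl⟩)
  rw [← hS.2.2.1, Set.mem_iUnion₂] at hx
  obtain ⟨B, hB, hxB⟩ := hx
  obtain ⟨β, hβ0, hβB, hβ1, hβx⟩ := mem_cycHull_iff.mp hxB
  refine ⟨B, hB, α - β, powerSumsVanish_sub_iff.mpr ⟨hα1.trans hβ1.symm, hβx.symm⟩,
    fun h => ?_, fun v hv => ?_, fun v hv => ?_⟩
  · obtain ⟨v, hvF, hvB⟩ := not_subset.mp (hFS B hB)
    have := congr_fun h v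
    simp [α, hvF, hβB v hvB, hF.card_pos.ne'] at this
  · by_contra hvF
    have : 0 < α v - β v := by simpa [posSupp] using hv
    linarith [hβ0 v, show α v = 0 from if_neg hvF]
  · by_contra hvB
    have : α v - β v < 0 := by simpa [negSupp] using hv
    linarith [hα0 v, hβB v hvB]

theorem exists_superset_mem_iff {S : Finset (Finset (Fin m))} (hS : IsTriang d m S)
    {F : Finset (Fin m)} (hF : F.Nonempty) :
    (∃ B ∈ S, F ⊆ B) ↔ ∀ G ⊆ F, G.card = d + 1 → SepFinset m G → ∃ B ∈ S, G ⊆ B := by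
  refine ⟨fun ⟨B, hB, hFB⟩ G hGF _ _ => ⟨B, hB, hGF.trans hFB⟩, fun hsep => ?_⟩
  by_contra! hFS
  obtain ⟨B, hB, γ, hγ, hγ0, hγpos, hγneg⟩ := exists_powerSumsVanish_of_forall_not_subset hS hF hFS
  obtain ⟨η, hη, hη0, hconf, hcard, hsepη⟩ := exists_conforms_sepFinset_posSupp hγ hγ0
  obtain ⟨B₂, hB₂, hPB₂⟩ := hsep _ (hconf.posSupp_subset.trans hγpos) hcard hsepη
  exact hη0 (eq_zero_of_posSupp_subset_of_negSupp_subset hS hB₂ hB hη hPB₂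
    (hconf.negSupp_subset.trans hγneg))

theorem subset_of_eSetF_subset {S T : Finset (Finset (Fin m))} (hS : IsTriang d m S)
    (hT : IsTriang d m T) (h : eSetF d m S ⊆ eSetF d m T) : S ⊆ T := by
  intro B hB
  have hBcard := hS.1 B hB
  obtain ⟨B', hB', hBB'⟩ := (exists_superset_mem_iff hT (card_pos.mp (by omega))).mpr
    fun G hGB hG hGsep => (h ⟨hG, hGsep, B, hB, hGB⟩).2.2
  rwa [eq_of_subset_of_card_le hBB' (by rw [hT.1 B' hB', hBcard])]

end CyclicPolytope

theorem triangulation_determined_by_d_faces_general (d m : ℕ)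
    (S : Finset (Finset (Fin m))) (hS : IsTriang d m S) :
    (∀ F : Finset (Fin m), d + 1 ≤ F.card →
      ((∃ B ∈ S, F ⊆ B) ↔
        ∀ G ⊆ F, G.card = d + 1 → (¬ SepFinset m G ∨ G ∈ eSetF d m S))) ∧
    (∀ T : Finset (Finset (Fin m)), IsTriang d m T → eSetF d m S = eSetF d m T → S = T) := by
  refine ⟨fun F hF => ?_, fun T hT hST =>
    (CyclicPolytope.subset_of_eSetF_subset hS hT hST.le).antisymm
      (CyclicPolytope.subset_of_eSetF_subset hT hS hST.ge)⟩
  rw [CyclicPolytope.exists_superset_mem_iff hS (card_pos.mp (by omega))]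
  refine forall₂_congr fun G _ => forall_congr' fun hG => ?_
  by_cases hsep : SepFinset m G <;> simp [hsep, eSetF, hG]

/-- A triangulation `S` of `C(m,2d)` is determined by its `d`-faces: the faces of `S` of
dimension at least `d` are exactly the vertex sets all of whose `(d+1)`-element subsets are
either non-separated or belong to `e(S)`; consequently two triangulations with the same
`e`-set coincide. -/
theorem triangulation_determined_by_d_faces (d m : ℕ) (hd : 0 < d) (hm : 2*d+1 ≤ m)
    (S : Finset (Finset (Fin m))) (hS : IsTriang d m S) :
    (∀ F : Finset (Fin m), d + 1 ≤ F.card →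
      ((∃ B ∈ S, F ⊆ B) ↔
        ∀ G ⊆ F, G.card = d + 1 → (¬ SepFinset m G ∨ G ∈ eSetF d m S))) ∧
    (∀ T : Finset (Finset (Fin m)), IsTriang d m T → eSetF d m S = eSetF d m T → S = T) :=
  triangulation_determined_by_d_faces_general d m S hS
end

section
/- The maximal size of a non-intertwining set of separated (d+1)-tuples from {1,...,m} is binomial(m-d-1, d). Furthermore, if X attains this size, then |X/1| = binomial(m-d-2, d) and |X\{1,2}| = binomial(m-d-2, d-1). -/
open Finset

/-- `X/1`: replace every entry `1` by `2` and discard the tuples that become non-separated. -/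
def divOne (d m : ℕ) (X : Set (Fin (d+1) → ℕ)) : Set (Fin (d+1) → ℕ) :=
  {B | SepTuple d m B ∧ ∃ A ∈ X, B = fun x => if A x = 1 then 2 else A x}

/-- `X∖{1,2}`: the `d`-tuples `A` such that `1⋆A ∈ X` and either `2⋆A ∈ X` or `3` is an
entry of `A`. -/
def minus12 (d : ℕ) (X : Set (Fin (d+1) → ℕ)) : Set (Fin d → ℕ) :=
  {A | Fin.cons 1 A ∈ X ∧ (Fin.cons 2 A ∈ X ∨ ∃ x, A x = 3)}

/-!
Replacing a leading `1` by `2` maps the tuples of `X` onto `X/1`, except that it merges `1⋆A`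
with `2⋆A` when both lie in `X`, and that `2⋆A` is discarded when it is not separated, i.e. when
`3` occurs in `A`. The tuples `1⋆A` lost in this way are exactly those with `A ∈ X∖{1,2}`, so
`|X| = |X/1| + |X∖{1,2}|`. Both families are again non-intertwining: a monotone relabelling of
the entries cannot create an intertwining pair, and if `A` intertwines `B` in `X∖{1,2}` with
`2⋆B ∈ X`, then `1⋆A` intertwines `2⋆B`. Shifted down by `1` resp. `2` they are separated
families in `{1,…,m-1}` resp. of `d`-tuples in `{1,…,m-2}`, so induction on `m` and Pascal's
rule give the bound, and when `X` attains it both partial bounds are attained. The separated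
tuples starting with `1` attain it.
-/

section Intertwining

variable {α β : Type*} {n : ℕ}

lemma Intw.of_comp [LinearOrder α] [Preorder β] {f : α → β} (hf : Monotone f)
    {X Y : Fin n → α} (h : Intw (f ∘ X) (f ∘ Y)) : Intw X Y :=
  ⟨fun i => hf.reflect_lt (h.1 i), fun i j hij => hf.reflect_lt (h.2 i j hij)⟩

lemma Intw.cons [LT α] {a b : α} {X Y : Fin (n+1) → α} (hab : a < b) (hb : b < X 0)
    (h : Intw X Y) : Intw (Fin.cons a X : Fin (n+2) → α) (Fin.cons b Y) := by
  refine ⟨Fin.cases hab h.1, fun i j hij => ?_⟩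
  cases j using Fin.cases with
  | zero => simp at hij
  | succ j =>
    cases i using Fin.cases with
    | zero =>
      obtain rfl : j = 0 := Fin.ext (by simp at hij; omega)
      exact hb
    | succ i => exact h.2 i j (by simpa using hij)

lemma NonIntw.mono [LT α] {R S : Set (Fin n → α)} (h : NonIntw S) (hRS : R ⊆ S) : NonIntw R :=
  fun X hX Y hY => h X (hRS hX) Y (hRS hY)

lemma NonIntw.image_comp [LinearOrder α] [Preorder β] {f : α → β} (hf : Monotone f)
    {R : Set (Fin n → α)} (h : NonIntw R) : NonIntw ((f ∘ ·) '' R) := by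
  rintro _ ⟨X, hX, rfl⟩ _ ⟨Y, hY, rfl⟩ hXY
  exact h X hX Y hY (hXY.of_comp hf)

lemma NonIntw.subsingleton [LinearOrder α] {R : Set (Fin 1 → α)} (h : NonIntw R) :
    R.Subsingleton := by
  have intw_of_lt {X Y : Fin 1 → α} (hXY : X 0 < Y 0) : Intw X Y :=
    ⟨fun i => Fin.fin_one_eq_zero i ▸ hXY, fun i j hij => by omega⟩
  intro X hX Y hY
  rcases lt_trichotomy (X 0) (Y 0) with hlt | heq | hgt
  · exact (h X hX Y hY (intw_of_lt hlt)).elim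
  · exact funext fun i => Fin.fin_one_eq_zero i ▸ heq
  · exact (h Y hY X hX (intw_of_lt hgt)).elim

end Intertwining

lemma ncard_eq_ncard_sdiff_add_ncard_cons {α : Type*} {n : ℕ} {X : Set (Fin (n+1) → α)}
    (hX : X.Finite) (a : α) :
    X.ncard = (X \ {A | A 0 = a}).ncard + {T | Fin.cons a T ∈ X}.ncard := by
  rw [← Set.ncard_inter_add_ncard_sdiff_eq_ncard X {A | A 0 = a} hX, add_comm,
    ← Set.ncard_image_of_injective {T | Fin.cons a T ∈ X}
      (Fin.cons_right_injective (α := fun _ => α) a)]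
  congr 2
  ext A
  constructor
  · rintro ⟨hA, rfl⟩
    exact ⟨Fin.tail A, (Fin.cons_self_tail A).symm ▸ hA, Fin.cons_self_tail A⟩
  · rintro ⟨T, hT, rfl⟩
    exact ⟨hT, Fin.cons_zero _ _⟩

section SepTuple

variable {d e m : ℕ}

lemma SepTuple.apply_zero_add_le {A : Fin (d+1) → ℕ} (h : SepTuple d m A) (x : Fin (d+1)) :
    A 0 + 2 * x ≤ A x := by
  induction x using Fin.induction with
  | zero => simp
  | succ x ih =>
    have := h.2 x.castSucc x.succ (by simp)
    simp only [Fin.val_castSucc, Fin.val_succ] at ih ⊢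
    omega

lemma SepTuple.two_mul_add_one_le {A : Fin (d+1) → ℕ} (h : SepTuple d m A) :
    2 * d + 1 ≤ m := by
  have := h.apply_zero_add_le (Fin.last d)
  have := (h.1 0).1
  have := (h.1 (Fin.last d)).2
  simp only [Fin.val_last] at *
  omega

lemma sepTuple_cons_iff {a : ℕ} {T : Fin (e+1) → ℕ} :
    SepTuple (e+1) m (Fin.cons a T) ↔ 1 ≤ a ∧ a + 2 ≤ T 0 ∧ SepTuple e m T := by
  constructor
  · intro h
    refine ⟨by simpa using (h.1 0).1, by simpa using h.2 0 1 rfl,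
      fun x => by simpa using h.1 x.succ,
      fun i j hij => by simpa using h.2 i.succ j.succ (by simpa using hij)⟩
  · rintro ⟨ha, haT, hT⟩
    refine ⟨fun x => ?_, fun i j hij => ?_⟩
    · cases x using Fin.cases with
      | zero => have := (hT.1 0).2; simp only [Fin.cons_zero]; omega
      | succ x => simpa using hT.1 x
    · cases j using Fin.cases with
      | zero => simp at hij
      | succ j =>
        cases i using Fin.cases with
        | zero =>
          obtain rfl : j = 0 := Fin.ext (by simp at hij; omega)
          simpa using haT
        | succ i => simpa using hT.2 i j (by simpa using hij)

lemma finite_setOf_sepTuple (d m : ℕ) : {A : Fin (d+1) → ℕ | SepTuple d m A}.Finite :=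
  (Set.finite_Iic fun _ => m).subset fun _ hA x => (hA.1 x).2

lemma bijOn_sub_sepTuple (d m j : ℕ) :
    Set.BijOn (fun A : Fin (d+1) → ℕ => (· - j) ∘ A) {A | SepTuple d m A ∧ j < A 0}
      {A | SepTuple d (m - j) A} := by
  have lt_apply {A : Fin (d+1) → ℕ} (hA : SepTuple d m A ∧ j < A 0) (x) : j < A x := by
    have := hA.1.apply_zero_add_le x; omega
  refine ⟨fun A hA => ⟨fun x => ?_, fun x y hxy => ?_⟩, fun A hA B hB hAB => ?_,
    fun C hC => ?_⟩
  · have := hA.1.1 x; have := lt_apply hA x; simp only [Function.comp_apply]; omega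
  · have := hA.1.2 x y hxy; have := lt_apply hA x; simp only [Function.comp_apply]; omega
  · funext x
    have := congrFun hAB x; have := lt_apply hA x; have := lt_apply hB x
    simp only [Function.comp_apply] at *; omega
  · refine ⟨(· + j) ∘ C, ⟨⟨fun x => ?_, fun x y hxy => ?_⟩, ?_⟩, ?_⟩
    · have := hC.1 x; simp only [Function.comp_apply]; omega
    · have := hC.2 x y hxy; simp only [Function.comp_apply]; omega
    · have := (hC.1 0).1; simp only [Function.comp_apply]; omega
    · funext x; simp

lemma ncard_setOf_sepTuple_lt_apply_zero (d m j : ℕ) :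
    {A : Fin (d+1) → ℕ | SepTuple d m A ∧ j < A 0}.ncard = {A | SepTuple d (m - j) A}.ncard :=
  (bijOn_sub_sepTuple d m j).ncard_eq

lemma setOf_sepTuple_cons_one (e m : ℕ) :
    {T : Fin (e+1) → ℕ | SepTuple (e+1) m (Fin.cons 1 T)} =
      {T | SepTuple e m T ∧ 2 < T 0} := by
  ext T
  simp only [Set.mem_ofPred_eq, sepTuple_cons_iff, le_refl, true_and]
  exact ⟨fun h => ⟨h.2, by omega⟩, fun h => ⟨by omega, h.1⟩⟩

theorem ncard_setOf_sepTuple (d m : ℕ) :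
    {A : Fin (d+1) → ℕ | SepTuple d m A}.ncard = (m - d).choose (d+1) := by
  induction m using Nat.strong_induction_on generalizing d with
  | _ m ih =>
  rcases m with _ | m
  · have : {A : Fin (d+1) → ℕ | SepTuple d 0 A} = ∅ :=
      Set.eq_empty_of_forall_notMem fun A hA => by have := hA.1 0; omega
    simp [this]
  have hrest : {A : Fin (d+1) → ℕ | SepTuple d (m+1) A} \ {A | A 0 = 1}
      = {A | SepTuple d (m+1) A ∧ 1 < A 0} := by
    ext A
    simp only [Set.mem_sdiff, Set.mem_ofPred_eq]
    have := fun h : SepTuple d (m+1) A => (h.1 0).1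
    constructor <;> rintro ⟨h, h'⟩ <;> exact ⟨h, by have := this h; omega⟩
  rw [ncard_eq_ncard_sdiff_add_ncard_cons (finite_setOf_sepTuple _ _) 1, hrest,
    ncard_setOf_sepTuple_lt_apply_zero, Nat.add_sub_cancel, ih m (by omega)]
  rcases d with _ | e
  · have : {T : Fin 0 → ℕ | Fin.cons 1 T ∈ {A : Fin 1 → ℕ | SepTuple 0 (m+1) A}} =
        Set.univ :=
      Set.eq_univ_of_forall fun T => ⟨fun x => by fin_cases x; simp, fun i j hij => by omega⟩
    rw [this, Set.ncard_univ, Nat.card_unique]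
    simp
  · simp only [Set.mem_ofPred_eq]
    rw [setOf_sepTuple_cons_one, ncard_setOf_sepTuple_lt_apply_zero, ih (m + 1 - 2) (by omega)]
    rw [show m + 1 - 2 - e = m - (e+1) by omega, show m + 1 - (e+1) = m - e by omega]
    rcases Nat.eq_zero_or_pos (m - e) with hm | hm
    · simp [hm, show m - (e+1) = 0 by omega]
    · rw [show m - e = m - (e+1) + 1 by omega, Nat.choose_succ_succ' _ (e+1), add_comm]

end SepTuple

/-- `divOne d m X` consists of the separated tuples `oneToTwo ∘ A` with `A ∈ X`. -/
def oneToTwo (n : ℕ) : ℕ := if n = 1 then 2 else n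

lemma monotone_oneToTwo : Monotone oneToTwo := by
  intro a b hab
  unfold oneToTwo
  split_ifs <;> omega

lemma nonIntw_divOne {d m : ℕ} {X : Set (Fin (d+1) → ℕ)} (h : NonIntw X) :
    NonIntw (divOne d m X) :=
  (h.image_comp monotone_oneToTwo).mono fun _ ⟨_, A, hA, hB⟩ => ⟨A, hA, hB.symm⟩

section DivOneMinus12

variable {e m : ℕ} {X : Set (Fin (e+2) → ℕ)}

lemma oneToTwo_comp_cons {a : ℕ} {T : Fin (e+1) → ℕ} (h : SepTuple (e+1) m (Fin.cons a T)) :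
    oneToTwo ∘ Fin.cons a T = Fin.cons (oneToTwo a) T := by
  obtain ⟨-, haT, hT⟩ := sepTuple_cons_iff.1 h
  rw [Fin.comp_cons]
  congr 1
  funext x
  have := hT.apply_zero_add_le x
  simp only [Function.comp_apply, oneToTwo, ite_eq_right_iff]
  omega

lemma divOne_subset (hX : ∀ A ∈ X, SepTuple (e+1) m A) :
    divOne (e+1) m X ⊆ {A | SepTuple (e+1) m A ∧ 1 < A 0} := by
  rintro _ ⟨hB, A, hA, rfl⟩
  exact ⟨hB, monotone_oneToTwo ((hX A hA).1 0).1⟩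

lemma minus12_subset (hX : ∀ A ∈ X, SepTuple (e+1) m A) :
    minus12 (e+1) X ⊆ {T | SepTuple e m T ∧ 2 < T 0} := fun T hT => by
  obtain ⟨-, hT0, hT⟩ := sepTuple_cons_iff.1 (hX _ hT.1)
  exact ⟨hT, by omega⟩

lemma nonIntw_minus12 (hX : ∀ A ∈ X, SepTuple (e+1) m A) (h : NonIntw X) :
    NonIntw (minus12 (e+1) X) := by
  intro T hT T' hT' hTT'
  obtain ⟨hTsep, hT0⟩ := minus12_subset hX hT
  rcases hT'.2 with hT'2 | ⟨x, hx⟩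
  · exact h _ hT.1 _ hT'2 (hTT'.cons one_lt_two hT0)
  · have := hTT'.1 x; have := hTsep.apply_zero_add_le x; omega

lemma divOne_eq_union (hX : ∀ A ∈ X, SepTuple (e+1) m A) :
    divOne (e+1) m X =
      X \ {A | A 0 = 1} ∪ Fin.cons 2 '' ({T | Fin.cons 1 T ∈ X} \ minus12 (e+1) X) := by
  ext B
  constructor
  · rintro ⟨hB, A, hA, rfl⟩
    obtain ⟨a, T, rfl⟩ : ∃ a T, A = Fin.cons a T :=
      ⟨A 0, Fin.tail A, (Fin.cons_self_tail A).symm⟩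
    change SepTuple _ _ (oneToTwo ∘ Fin.cons a T) at hB
    change oneToTwo ∘ Fin.cons a T ∈ _
    rw [oneToTwo_comp_cons (hX _ hA)] at hB ⊢
    by_cases ha : a = 1
    · subst ha
      rw [show oneToTwo 1 = 2 from rfl] at hB ⊢
      by_cases h2 : Fin.cons 2 T ∈ X
      · exact Or.inl ⟨h2, by simp⟩
      · refine Or.inr ⟨T, ⟨hA, fun hT => ?_⟩, rfl⟩
        obtain ⟨-, hT0, hTsep⟩ := sepTuple_cons_iff.1 hB
        rcases hT.2 with h2' | ⟨x, hx⟩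
        · exact h2 h2'
        · have := hTsep.apply_zero_add_le x; omega
    · simp only [oneToTwo, if_neg ha]
      exact Or.inl ⟨hA, by simpa using ha⟩
  · rintro (⟨hA, hA1⟩ | ⟨T, ⟨hT1, hT⟩, rfl⟩)
    · obtain ⟨a, T, rfl⟩ : ∃ a T, B = Fin.cons a T :=
        ⟨B 0, Fin.tail B, (Fin.cons_self_tail B).symm⟩
      refine ⟨hX _ hA, _, hA, ?_⟩
      change _ = oneToTwo ∘ Fin.cons a T
      rw [oneToTwo_comp_cons (hX _ hA), show oneToTwo a = a from if_neg (by simpa using hA1)]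
    · obtain ⟨-, hT0, hTsep⟩ := sepTuple_cons_iff.1 (hX _ hT1)
      have : T 0 ≠ 3 := fun h => hT ⟨hT1, Or.inr ⟨0, h⟩⟩
      refine ⟨sepTuple_cons_iff.2 ⟨by norm_num, by omega, hTsep⟩, _, hT1, ?_⟩
      change _ = oneToTwo ∘ _
      rw [oneToTwo_comp_cons (hX _ hT1)]
      rfl

theorem ncard_divOne_add_ncard_minus12 (hX : ∀ A ∈ X, SepTuple (e+1) m A) :
    (divOne (e+1) m X).ncard + (minus12 (e+1) X).ncard = X.ncard := by
  have hXfin : X.Finite := (finite_setOf_sepTuple _ _).subset hX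
  have hconsfin : {T | Fin.cons 1 T ∈ X}.Finite :=
    hXfin.preimage (Fin.cons_right_injective (α := fun _ => ℕ) 1).injOn
  have hdisj : Disjoint (X \ {A | A 0 = 1})
      (Fin.cons 2 '' ({T | Fin.cons 1 T ∈ X} \ minus12 (e+1) X)) := by
    rw [Set.disjoint_right]
    rintro _ ⟨T, ⟨hT1, hT⟩, rfl⟩ ⟨h2, -⟩
    exact hT ⟨hT1, Or.inl h2⟩
  rw [divOne_eq_union hX, Set.ncard_union_eq hdisj hXfin.sdiff (hconsfin.sdiff.image _),
    Set.ncard_image_of_injective _ (Fin.cons_right_injective (α := fun _ => ℕ) 2), add_assoc,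
    Set.ncard_sdiff_add_ncard_of_subset (fun T hT => hT.1) hconsfin,
    ← ncard_eq_ncard_sdiff_add_ncard_cons hXfin]

end DivOneMinus12

def NonIntwBound (d m N : ℕ) : Prop :=
  ∀ X : Set (Fin (d+1) → ℕ), (∀ A ∈ X, SepTuple d m A) → NonIntw X → X.ncard ≤ N

lemma NonIntwBound.ncard_le_of_lt_apply_zero {d m j N : ℕ} (hB : NonIntwBound d (m - j) N)
    {X : Set (Fin (d+1) → ℕ)} (hX : X ⊆ {A | SepTuple d m A ∧ j < A 0}) (h : NonIntw X) :
    X.ncard ≤ N := by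
  have hbij := bijOn_sub_sepTuple d m j
  rw [← (hbij.injOn.mono hX).ncard_image]
  exact hB _ (fun _ hA => (hbij.mapsTo.mono_left hX).image_subset hA)
    (h.image_comp fun a b hab => Nat.sub_le_sub_right hab j)

lemma choose_eq_add_of_two_mul_add_three_le {e m : ℕ} (hm : 2 * e + 3 ≤ m) :
    (m - (e+1) - 1).choose (e+1) =
      (m - 1 - (e+1) - 1).choose (e+1) + (m - 2 - e - 1).choose e := by
  rw [show m - (e+1) - 1 = (m - 2 - e - 1) + 1 by omega, Nat.choose_succ_succ',
    show m - 1 - (e+1) - 1 = m - 2 - e - 1 by omega, add_comm]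

theorem nonIntwBound_choose (d m : ℕ) : NonIntwBound d m ((m - d - 1).choose d) := by
  induction m using Nat.strong_induction_on generalizing d with
  | _ m ih =>
  intro X hX hni
  rcases d with _ | e
  · have hs := hni.subsingleton
    simpa using (Set.ncard_le_one hs.finite).2 fun _ ha _ hb => hs ha hb
  rcases X.eq_empty_or_nonempty with rfl | ⟨A, hA⟩
  · simp
  have hm := (hX A hA).two_mul_add_one_le
  rw [← ncard_divOne_add_ncard_minus12 hX, choose_eq_add_of_two_mul_add_three_le (by omega)]
  exact add_le_add
    ((ih (m - 1) (by omega) (e+1)).ncard_le_of_lt_apply_zero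
      (divOne_subset hX) (nonIntw_divOne hni))
    ((ih (m - 2) (by omega) e).ncard_le_of_lt_apply_zero
      (minus12_subset hX) (nonIntw_minus12 hX hni))

theorem exists_nonIntw_ncard_eq_choose (e m : ℕ) :
    ∃ X : Set (Fin (e+2) → ℕ), (∀ A ∈ X, SepTuple (e+1) m A) ∧ NonIntw X ∧
      X.ncard = (m - (e+1) - 1).choose (e+1) := by
  refine ⟨Fin.cons 1 '' {T | SepTuple e m T ∧ 2 < T 0}, ?_, ?_, ?_⟩
  · rintro _ ⟨T, hT, rfl⟩
    exact sepTuple_cons_iff.2 ⟨le_rfl, hT.2, hT.1⟩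
  · rintro _ ⟨T, -, rfl⟩ _ ⟨T', -, rfl⟩ h
    simpa using h.1 0
  · rw [Set.ncard_image_of_injective _ (Fin.cons_right_injective (α := fun _ => ℕ) 1),
      ncard_setOf_sepTuple_lt_apply_zero, ncard_setOf_sepTuple]
    congr 1
    omega

/-- The maximal size of a non-intertwining set of separated `(d+1)`-tuples from `{1,…,m}`
is `(m-d-1).choose d`; if `X` attains this size then `|X/1| = (m-d-2).choose d` and
`|X∖{1,2}| = (m-d-2).choose (d-1)`. -/
theorem max_nonintertwining_size (d m : ℕ) (hd : 0 < d) (hm : 2*d+1 ≤ m) :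
    (∀ X : Set (Fin (d+1) → ℕ), (∀ A ∈ X, SepTuple d m A) → NonIntw X →
      X.ncard ≤ (m - d - 1).choose d) ∧
    (∃ X : Set (Fin (d+1) → ℕ), (∀ A ∈ X, SepTuple d m A) ∧ NonIntw X ∧
      X.ncard = (m - d - 1).choose d) ∧
    (∀ X : Set (Fin (d+1) → ℕ), (∀ A ∈ X, SepTuple d m A) → NonIntw X →
      X.ncard = (m - d - 1).choose d →
      (divOne d m X).ncard = (m - d - 2).choose d ∧
        (minus12 d X).ncard = (m - d - 2).choose (d-1)) := by
  obtain ⟨e, rfl⟩ : ∃ e, d = e + 1 := ⟨d - 1, by omega⟩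
  refine ⟨nonIntwBound_choose (e+1) m, exists_nonIntw_ncard_eq_choose e m,
    fun X hX hni hcard => ?_⟩
  have hdivOne := (nonIntwBound_choose (e+1) (m - 1)).ncard_le_of_lt_apply_zero
    (divOne_subset hX) (nonIntw_divOne hni)
  have hminus12 := (nonIntwBound_choose e (m - 2)).ncard_le_of_lt_apply_zero
    (minus12_subset hX) (nonIntw_minus12 hX hni)
  have hsum := ncard_divOne_add_ncard_minus12 hX
  rw [choose_eq_add_of_two_mul_add_three_le (by omega)] at hcard
  constructor
  · rw [show m - (e+1) - 2 = m - 1 - (e+1) - 1 by omega]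
    omega
  · rw [show m - (e+1) - 2 = m - 2 - e - 1 by omega, Nat.add_sub_cancel]
    omega
end

section
/- If X and Y are non-intertwining sets of separated (d+1)-tuples from {1,...,m}, each of cardinality binomial(m-d-1, d), such that X/1 = Y/1 and X\{1,2} = Y\{1,2}, then X = Y. -/
/-!
A non-intertwining family of separated `(n+1)`-tuples from `{1, …, m}` has at most
`(m-n-1).choose n` members: this follows by induction from `|F| ≤ |F/1| + |F∖{1,2}|`, applied to
tuples from `{c, …, m}`. So `X` and `Y` are of maximal size. A tuple of `X` whose first entry is at
least `3` is recovered from `X/1`, and `1⋆T` with `T 0 = 3` from `X∖{1,2}`. For `T 0 ≥ 4`, the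
sets `X/1` and `X∖{1,2}` leave open only that `2⋆T` lies in just one of `X` and `Y`, and an
extremal choice of such a `T` contradicts the maximality of that set.
-/

open Finset

/-- `SepTuple d m` with lower bound `c` in place of `1`. -/
def Separated (c m : ℕ) {n : ℕ} (A : Fin n → ℕ) : Prop :=
  (∀ x, c ≤ A x ∧ A x ≤ m) ∧ ∀ i j : Fin n, i.1 + 1 = j.1 → A i + 2 ≤ A j

def raise (c : ℕ) {n : ℕ} (A : Fin n → ℕ) : Fin n → ℕ :=
  fun x => if A x = c then c + 1 else A x

/-- `F/c`, so that `divOne d m = divAt 1 m`. -/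
def divAt (c m : ℕ) {n : ℕ} (F : Set (Fin n → ℕ)) : Set (Fin n → ℕ) :=
  {B | Separated c m B ∧ ∃ A ∈ F, B = raise c A}

/-- `F∖{c, c+1}`, so that `minus12 d = minusAt 1`. -/
def minusAt (c : ℕ) {n : ℕ} (F : Set (Fin (n+1) → ℕ)) : Set (Fin n → ℕ) :=
  {T | Fin.cons c T ∈ F ∧ (Fin.cons (c+1) T ∈ F ∨ ∃ x, T x = c + 2)}

section Tuples

variable {n : ℕ}

theorem cons_rel_cons_iff {α : Type*} (R : α → α → Prop) (a b : α) (S T : Fin (n+1) → α) :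
    (∀ i j : Fin (n+2), i.1 + 1 = j.1 →
      R ((Fin.cons a S : Fin (n+2) → α) i) ((Fin.cons b T : Fin (n+2) → α) j)) ↔
      R a (T 0) ∧ ∀ i j : Fin (n+1), i.1 + 1 = j.1 → R (S i) (T j) := by
  constructor
  · intro h
    exact ⟨h 0 1 rfl, fun i j hij => h i.succ j.succ (by simp [hij])⟩
  · rintro ⟨h0, h⟩ i j hij
    induction j using Fin.cases with
    | zero => simp at hij
    | succ j =>
      induction i using Fin.cases with
      | zero =>
        obtain rfl : j = 0 := Fin.ext (by simp at hij; omega)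
        exact h0
      | succ i => exact h i j (by simpa using hij)

theorem intw_cons_iff {α : Type*} [LT α] (a b : α) (S T : Fin (n+1) → α) :
    Intw (Fin.cons a S) (Fin.cons b T) ↔ a < b ∧ b < S 0 ∧ Intw S T := by
  rw [Intw, Intw, cons_rel_cons_iff (· < ·) b a T S, Fin.forall_fin_succ]
  simp only [Fin.cons_zero, Fin.cons_succ]
  tauto

theorem nonIntw_insert {α : Type*} [Preorder α] {R : Set (Fin (n+1) → α)} {A : Fin (n+1) → α}
    (hR : NonIntw R) (hA : ∀ B ∈ R, ¬ Intw A B ∧ ¬ Intw B A) : NonIntw (insert A R) := by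
  rintro U (rfl | hU) V (rfl | hV) hUV
  · exact lt_irrefl _ (hUV.1 0)
  · exact (hA V hV).1 hUV
  · exact (hA U hU).2 hUV
  · exact hR U hU V hV hUV

end Tuples

namespace Separated

variable {c m n : ℕ}

theorem head_add_two_mul_le {A : Fin (n+1) → ℕ} (hA : Separated c m A) (x : Fin (n+1)) :
    A 0 + 2 * x ≤ A x := by
  induction x using Fin.induction with
  | zero => simp
  | succ x ih =>
    have := hA.2 x.castSucc x.succ (by simp)
    simp only [Fin.val_succ, Fin.val_castSucc] at ih ⊢
    omega

theorem head_le {A : Fin (n+1) → ℕ} (hA : Separated c m A) (x : Fin (n+1)) : A 0 ≤ A x :=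
  (Nat.le_add_right _ _).trans (hA.head_add_two_mul_le x)

theorem of_le_head {c' : ℕ} {A : Fin (n+1) → ℕ} (hA : Separated c m A) (h : c' ≤ A 0) :
    Separated c' m A :=
  ⟨fun x => ⟨h.trans (hA.head_le x), (hA.1 x).2⟩, hA.2⟩

theorem cons_iff {a : ℕ} {T : Fin (n+1) → ℕ} :
    Separated c m (Fin.cons a T) ↔ (c ≤ a ∧ a ≤ m) ∧ a + 2 ≤ T 0 ∧ Separated c m T := by
  rw [Separated, Separated, cons_rel_cons_iff (fun x y => x + 2 ≤ y) a a T T,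
    Fin.forall_fin_succ]
  simp only [Fin.cons_zero, Fin.cons_succ]
  tauto

theorem finite : {A : Fin n → ℕ | Separated c m A}.Finite :=
  (Set.Finite.pi' fun _ => Set.finite_Iic m).subset fun _ hA x => (hA.1 x).2

end Separated

section Raise

variable {c m n : ℕ}

theorem raise_eq_self {A : Fin n → ℕ} (hA : ∀ x, A x ≠ c) : raise c A = A :=
  funext fun x => if_neg (hA x)

theorem eq_of_raise_eq {A B : Fin n → ℕ} (h : raise c A = B) (hB : ∀ x, B x ≠ c + 1) :
    A = B := by
  funext x
  have hx := congrFun h x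
  simp only [raise] at hx
  split_ifs at hx
  exacts [(hB x hx.symm).elim, hx]

theorem raise_cons_of_ne {a : ℕ} {T : Fin n → ℕ} (hT : ∀ x, T x ≠ c) :
    raise c (Fin.cons a T) = Fin.cons (if a = c then c + 1 else a) T := by
  funext x
  induction x using Fin.cases with
  | zero => rfl
  | succ x => exact if_neg (hT x)

theorem Separated.raise_cons {a : ℕ} {T : Fin (n+1) → ℕ}
    (hA : Separated c m (Fin.cons a T)) :
    raise c (Fin.cons a T) = Fin.cons (if a = c then c + 1 else a) T := by
  obtain ⟨⟨hca, -⟩, haT, hT⟩ := Separated.cons_iff.1 hA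
  exact raise_cons_of_ne fun x => by have := hT.head_le x; omega

end Raise

section Recursion

variable {c m n : ℕ}

theorem separated_of_mem_divAt {F : Set (Fin n → ℕ)} (hF : ∀ A ∈ F, Separated c m A)
    {B : Fin n → ℕ} (hB : B ∈ divAt c m F) : Separated (c+1) m B := by
  obtain ⟨hBsep, A, hA, rfl⟩ := hB
  refine ⟨fun x => ⟨?_, (hBsep.1 x).2⟩, hBsep.2⟩
  have := ((hF A hA).1 x).1
  simp only [raise]
  split_ifs <;> omega

theorem nonIntw_divAt {F : Set (Fin (n+2) → ℕ)} (hF : ∀ A ∈ F, Separated c m A)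
    (hni : NonIntw F) : NonIntw (divAt c m F) := by
  rintro _ ⟨-, A, hA, rfl⟩ _ ⟨-, A', hA', rfl⟩ h
  obtain ⟨a, T, rfl⟩ := Fin.exists_cons A
  obtain ⟨a', T', rfl⟩ := Fin.exists_cons A'
  have ha := (Separated.cons_iff.1 (hF _ hA)).1.1
  rw [(hF _ hA).raise_cons, (hF _ hA').raise_cons, intw_cons_iff] at h
  refine hni _ hA _ hA' ((intw_cons_iff _ _ _ _).2 ⟨?_, ?_, h.2.2⟩) <;>
    split_ifs at h <;> omega

theorem separated_of_mem_minusAt {F : Set (Fin (n+2) → ℕ)} (hF : ∀ A ∈ F, Separated c m A)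
    {T : Fin (n+1) → ℕ} (hT : T ∈ minusAt c F) : Separated (c+2) m T := by
  obtain ⟨-, hcT, hT⟩ := Separated.cons_iff.1 (hF _ hT.1)
  exact hT.of_le_head hcT

theorem nonIntw_minusAt {F : Set (Fin (n+2) → ℕ)} (hF : ∀ A ∈ F, Separated c m A)
    (hni : NonIntw F) : NonIntw (minusAt c F) := by
  intro T hT T' hT' h
  have hT0 := (separated_of_mem_minusAt hF hT).1 0
  rcases hT'.2 with hT'F | ⟨x, hx⟩
  · exact hni _ hT.1 _ hT'F ((intw_cons_iff _ _ _ _).2 ⟨by omega, by omega, h⟩)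
  · have := (separated_of_mem_minusAt hF hT').head_le x
    have := h.1 0
    omega

/-- `c⋆(F∖{c, c+1})` lies in `F`, and `raise c` maps the rest of `F` injectively into `F/c`:
`raise c A = raise c A'` with `A ≠ A'` forces `{A, A'} = {c⋆T, (c+1)⋆T}`. -/
theorem ncard_le_ncard_divAt_add_ncard_minusAt {F : Set (Fin (n+2) → ℕ)}
    (hF : ∀ A ∈ F, Separated c m A) :
    F.ncard ≤ (divAt c m F).ncard + (minusAt c F).ncard := by
  set G : Set (Fin (n+2) → ℕ) := Fin.cons c '' minusAt c F
  have hGF : G ⊆ F := by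
    rintro _ ⟨T, hT, rfl⟩
    exact hT.1
  have hG : G.ncard = (minusAt c F).ncard :=
    Set.ncard_image_of_injective _ (Fin.cons_right_injective (α := fun _ => ℕ) c)
  have mem_G {T : Fin (n+1) → ℕ} (h : Fin.cons c T ∈ F) (h' : Fin.cons (c+1) T ∈ F) :
      Fin.cons c T ∈ G :=
    ⟨T, ⟨h, Or.inl h'⟩, rfl⟩
  have hrest : (F \ G).ncard ≤ (divAt c m F).ncard := by
    refine Set.ncard_le_ncard_of_injOn (raise c) ?_ ?_
      (Separated.finite.subset fun B hB => hB.1)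
    · rintro A ⟨hA, hAG⟩
      refine ⟨?_, A, hA, rfl⟩
      obtain ⟨a, T, rfl⟩ := Fin.exists_cons A
      rw [(hF _ hA).raise_cons]
      split_ifs with ha
      · subst a
        obtain ⟨-, hcT, hT⟩ := Separated.cons_iff.1 (hF _ hA)
        have hT3 : T 0 ≠ c + 2 := fun h => hAG ⟨T, ⟨hA, Or.inr ⟨0, h⟩⟩, rfl⟩
        have := (hT.1 0).2
        exact Separated.cons_iff.2 ⟨⟨by omega, by omega⟩, by omega, hT⟩
      · exact hF _ hA
    · rintro A ⟨hA, hAG⟩ A' ⟨hA', hA'G⟩ h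
      obtain ⟨a, T, rfl⟩ := Fin.exists_cons A
      obtain ⟨a', T', rfl⟩ := Fin.exists_cons A'
      simp only [(hF _ hA).raise_cons, (hF _ hA').raise_cons, Fin.cons_inj] at h
      obtain ⟨ha, rfl⟩ := h
      split_ifs at ha with h₁ h₂ h₂'
      · rw [h₁, h₂]
      · exact (hAG (h₁ ▸ mem_G (h₁ ▸ hA) (ha ▸ hA'))).elim
      · exact (hA'G (h₂' ▸ mem_G (h₂' ▸ hA') (ha ▸ hA))).elim
      · rw [ha]
  have hsplit := Set.ncard_sdiff_add_ncard_of_subset hGF (Separated.finite.subset hF)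
  omega

theorem ncard_le_choose_of_nonIntw (t : ℕ) :
    ∀ {c m n : ℕ} {F : Set (Fin (n+1) → ℕ)}, m + 1 ≤ c + t →
      (∀ A ∈ F, Separated c m A) → NonIntw F → F.ncard ≤ (t - n - 1).choose n := by
  induction t using Nat.strong_induction_on with
  | _ t ih =>
  intro c m n F hmt hF hni
  obtain rfl | ⟨A, hA⟩ := F.eq_empty_or_nonempty
  · simp
  have hlen := (hF A hA).head_add_two_mul_le (Fin.last n)
  have := ((hF A hA).1 0).1
  have := ((hF A hA).1 (Fin.last n)).2
  simp only [Fin.val_last] at hlen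
  cases n with
  | zero =>
    rw [Nat.choose_zero_right, Set.ncard_le_one (Separated.finite.subset hF)]
    intro A hA B hB
    by_contra hAB
    have hne : A 0 ≠ B 0 := fun h => hAB (funext fun x => by rw [Fin.eq_zero x, h])
    have intw_of_lt {U V : Fin 1 → ℕ} (h : U 0 < V 0) : Intw U V :=
      ⟨fun i => by rwa [Fin.eq_zero i], fun i j hij => by omega⟩
    rcases hne.lt_or_gt with h | h
    exacts [hni A hA B hB (intw_of_lt h), hni B hB A hA (intw_of_lt h)]
  | succ k =>
    obtain ⟨s, rfl⟩ : ∃ s, t = s + k + 3 := ⟨t - k - 3, by omega⟩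
    have hdiv := ih (s + k + 2) (by omega) (by omega : m + 1 ≤ c + 1 + (s + k + 2))
      (fun _ => separated_of_mem_divAt hF) (nonIntw_divAt hF hni)
    have hminus := ih (s + k + 1) (by omega) (by omega : m + 1 ≤ c + 2 + (s + k + 1))
      (fun _ => separated_of_mem_minusAt hF) (nonIntw_minusAt hF hni)
    rw [show s + k + 2 - (k + 1) - 1 = s by omega] at hdiv
    rw [show s + k + 1 - k - 1 = s by omega] at hminus
    rw [show s + k + 3 - (k + 1) - 1 = s + 1 by omega, Nat.choose_succ_succ']
    have := ncard_le_ncard_divAt_add_ncard_minusAt hF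
    omega

end Recursion

section Transfer

variable {n m : ℕ} {X Y : Set (Fin (n+2) → ℕ)}

theorem mem_of_three_le_head (h1 : divAt 1 m X = divAt 1 m Y) {A : Fin (n+2) → ℕ}
    (hAsep : Separated 1 m A) (hA : A ∈ X) (h3 : 3 ≤ A 0) : A ∈ Y := by
  have hA3 (x) : 3 ≤ A x := h3.trans (hAsep.head_le x)
  have hmem : A ∈ divAt 1 m X :=
    ⟨hAsep, A, hA, (raise_eq_self fun x => by have := hA3 x; omega).symm⟩
  rw [h1] at hmem
  obtain ⟨-, A', hA', hAA'⟩ := hmem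
  rwa [← eq_of_raise_eq hAA'.symm fun x => by have := hA3 x; omega]

theorem cons_one_mem_or_cons_two_mem (hXsep : ∀ A ∈ X, Separated 1 m A)
    (hYsep : ∀ A ∈ Y, Separated 1 m A) (h1 : divAt 1 m X = divAt 1 m Y)
    {T : Fin (n+1) → ℕ} (hT4 : 4 ≤ T 0) (h : Fin.cons 1 T ∈ X ∨ Fin.cons 2 T ∈ X) :
    Fin.cons 1 T ∈ Y ∨ Fin.cons 2 T ∈ Y := by
  have hT : Separated 1 m T := by
    rcases h with h | h <;> exact (Separated.cons_iff.1 (hXsep _ h)).2.2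
  have hT1 (x) : T x ≠ 1 := by have := hT.head_le x; omega
  have hmem : Fin.cons 2 T ∈ divAt 1 m X := by
    refine ⟨Separated.cons_iff.2 ⟨⟨by omega, by have := (hT.1 0).2; omega⟩, hT4, hT⟩, ?_⟩
    rcases h with h | h
    exacts [⟨_, h, by simp [raise_cons_of_ne hT1]⟩, ⟨_, h, by simp [raise_cons_of_ne hT1]⟩]
  rw [h1] at hmem
  obtain ⟨-, A', hA', h⟩ := hmem
  obtain ⟨a', T', rfl⟩ := Fin.exists_cons A'
  rw [(hYsep _ hA').raise_cons, Fin.cons_inj] at h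
  obtain ⟨ha', rfl⟩ := h
  split_ifs at ha' with ha'1
  · exact .inl (ha'1 ▸ hA')
  · exact .inr (ha' ▸ hA')

theorem cons_mem_of_minusAt_eq (hXsep : ∀ A ∈ X, Separated 1 m A)
    (h2 : minusAt 1 X = minusAt 1 Y) {T : Fin (n+1) → ℕ} (hT4 : 4 ≤ T 0)
    (h₁ : Fin.cons 1 T ∈ X) (h₂ : Fin.cons 2 T ∈ X) :
    Fin.cons 1 T ∈ Y ∧ Fin.cons 2 T ∈ Y := by
  have hmem : T ∈ minusAt 1 Y := h2 ▸ ⟨h₁, .inl h₂⟩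
  refine ⟨hmem.1, hmem.2.resolve_right ?_⟩
  rintro ⟨x, hx⟩
  have := (Separated.cons_iff.1 (hXsep _ h₁)).2.2.head_le x
  omega

/-- Take `T` with `2⋆T ∈ X \ Y` and `∑ T` maximal. Then `1⋆T ∈ Y \ X`, and a `V ∈ X`
intertwined by `1⋆T` would be some `2⋆T'` with `T'` in the same situation and of larger sum.
So `insert (1⋆T) X` is non-intertwining, and too large. -/
theorem cons_two_mem_of_cons_two_mem (hXsep : ∀ A ∈ X, Separated 1 m A)
    (hYsep : ∀ A ∈ Y, Separated 1 m A) (hXni : NonIntw X) (hYni : NonIntw Y)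
    (hXcard : X.ncard = (m - (n+1) - 1).choose (n+1))
    (h1 : divAt 1 m X = divAt 1 m Y) (h2 : minusAt 1 X = minusAt 1 Y)
    {T : Fin (n+1) → ℕ} (hTX : Fin.cons 2 T ∈ X) : Fin.cons 2 T ∈ Y := by
  by_contra hTY
  obtain ⟨T, ⟨hTX, hTY⟩, hmax⟩ := Set.Finite.exists_maximalFor (fun T => ∑ i, T i)
    {T | Fin.cons 2 T ∈ X \ Y}
    (Separated.finite.subset fun T hT => (Separated.cons_iff.1 (hXsep _ hT.1)).2.2)
    ⟨T, hTX, hTY⟩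
  have hT4 : 4 ≤ T 0 := (Separated.cons_iff.1 (hXsep _ hTX)).2.1
  have h1X : Fin.cons 1 T ∉ X := fun h => hTY (cons_mem_of_minusAt_eq hXsep h2 hT4 h hTX).2
  have h1Y : Fin.cons 1 T ∈ Y :=
    (cons_one_mem_or_cons_two_mem hXsep hYsep h1 hT4 (.inr hTX)).resolve_right hTY
  have hni : NonIntw (insert (Fin.cons 1 T) X) := by
    refine nonIntw_insert hXni fun V hV => ⟨fun h => ?_, fun h => ?_⟩
    · obtain ⟨v, T', rfl⟩ := Fin.exists_cons V
      obtain ⟨h1v, -, hTT'⟩ := (intw_cons_iff _ _ _ _).1 h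
      have hVY : Fin.cons v T' ∉ Y := fun hVY => hYni _ h1Y _ hVY h
      obtain rfl : v = 2 := by
        by_contra hv
        exact hVY (mem_of_three_le_head h1 (hXsep _ hV) hV (by simp only [Fin.cons_zero]; omega))
      have := hmax ⟨hV, hVY⟩ (sum_le_sum fun i _ => (hTT'.1 i).le)
      dsimp only at this
      have := sum_lt_sum_of_nonempty univ_nonempty fun i _ => hTT'.1 i
      omega
    · have := h.1 0
      have := ((hXsep _ hV).1 0).1
      simp only [Fin.cons_zero] at *
      omega
  have hle := ncard_le_choose_of_nonIntw m (c := 1) (m := m) (by omega)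
    (by rintro A (rfl | hA); exacts [hYsep _ h1Y, hXsep A hA]) hni
  rw [Set.ncard_insert_of_notMem h1X (Separated.finite.subset hXsep), hXcard] at hle
  omega

theorem subset_of_divAt_eq_of_minusAt_eq (hXsep : ∀ A ∈ X, Separated 1 m A)
    (hYsep : ∀ A ∈ Y, Separated 1 m A) (hXni : NonIntw X) (hYni : NonIntw Y)
    (hXcard : X.ncard = (m - (n+1) - 1).choose (n+1))
    (hYcard : Y.ncard = (m - (n+1) - 1).choose (n+1))
    (h1 : divAt 1 m X = divAt 1 m Y) (h2 : minusAt 1 X = minusAt 1 Y) : X ⊆ Y := by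
  intro A hA
  obtain ⟨a, T, rfl⟩ := Fin.exists_cons A
  obtain ⟨⟨ha1, -⟩, haT, -⟩ := Separated.cons_iff.1 (hXsep _ hA)
  by_cases ha3 : 3 ≤ a
  · exact mem_of_three_le_head h1 (hXsep _ hA) hA ha3
  obtain rfl | rfl : a = 1 ∨ a = 2 := by omega
  · by_cases hT3 : T 0 = 3
    · exact (h2 ▸ ⟨hA, .inr ⟨0, hT3⟩⟩ : T ∈ minusAt 1 Y).1
    have hT4 : 4 ≤ T 0 := by omega
    refine (cons_one_mem_or_cons_two_mem hXsep hYsep h1 hT4 (.inl hA)).elim id fun h2Y => ?_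
    have h2X := cons_two_mem_of_cons_two_mem hYsep hXsep hYni hXni hYcard h1.symm h2.symm h2Y
    exact (cons_mem_of_minusAt_eq hXsep h2 hT4 hA h2X).1
  · exact cons_two_mem_of_cons_two_mem hXsep hYsep hXni hYni hXcard h1 h2 hA

end Transfer

theorem eq_of_divOne_minus12_eq_general (d m : ℕ) (hd : 0 < d)
    (X Y : Set (Fin (d+1) → ℕ))
    (hXsep : ∀ A ∈ X, SepTuple d m A) (hYsep : ∀ A ∈ Y, SepTuple d m A)
    (hXni : NonIntw X) (hYni : NonIntw Y)
    (hXcard : X.ncard = (m - d - 1).choose d) (hYcard : Y.ncard = (m - d - 1).choose d)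
    (h1 : divOne d m X = divOne d m Y) (h2 : minus12 d X = minus12 d Y) :
    X = Y := by
  obtain ⟨n, rfl⟩ : ∃ n, d = n + 1 := ⟨d - 1, by omega⟩
  exact (subset_of_divAt_eq_of_minusAt_eq hXsep hYsep hXni hYni hXcard hYcard h1 h2).antisymm
    (subset_of_divAt_eq_of_minusAt_eq hYsep hXsep hYni hXni hYcard hXcard h1.symm h2.symm)

/-- Two maximal-size non-intertwining sets of separated `(d+1)`-tuples with the same `X/1`
and `X∖{1,2}` coincide. -/
theorem eq_of_divOne_minus12_eq (d m : ℕ) (hd : 0 < d) (hm : 2*d+1 ≤ m)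
    (X Y : Set (Fin (d+1) → ℕ))
    (hXsep : ∀ A ∈ X, SepTuple d m A) (hYsep : ∀ A ∈ Y, SepTuple d m A)
    (hXni : NonIntw X) (hYni : NonIntw Y)
    (hXcard : X.ncard = (m - d - 1).choose d) (hYcard : Y.ncard = (m - d - 1).choose d)
    (h1 : divOne d m X = divOne d m Y) (h2 : minus12 d X = minus12 d Y) :
    X = Y :=
  eq_of_divOne_minus12_eq_general d m hd X Y hXsep hYsep hXni hYni hXcard hYcard h1 h2
end
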